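/- arXiv:2406.16626 — 3 statements merged into one kernel-verified Lean document; each statement's English description precedes it below -/
import Mathlib

section
/- For n independent binary attributes with favorable probabilities p_i ∈ (0,1) and conjunctive label, and any two distinct attributes o, q: G(o) - G(q) = 2·p_o·p_q·(∏_{i ∉ {o,q}} p_i²)·(p_o - p_q). In particular G(o) < G(q) iff p_o < p_q. -/
open Finset

/-!
Both impurities share the term `2 ∏ p`, and after pulling the factor of the other attribute out
of `∏_{j ≠ k} p_j²` both penalty terms carry the common product `∏_{i ∉ {o,q}} p_i²`; the
difference then factors, and its sign is that of `p o - p q` because the remaining factor is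
positive.
-/

section SplitGini

variable {ι R : Type*} [Fintype ι] [DecidableEq ι]

def splitGini [CommRing R] (p : ι → R) (k : ι) : R :=
  2 * (∏ j, p j) - 2 * p k * ∏ j ∈ univ.erase k, p j ^ 2

theorem splitGini_sub_splitGini [CommRing R] (p : ι → R) {o q : ι} (hoq : o ≠ q) :
    splitGini p o - splitGini p q
      = 2 * p o * p q * (∏ i ∈ (univ.erase o).erase q, p i ^ 2) * (p o - p q) := by
  have hq : q ∈ univ.erase o := mem_erase.2 ⟨hoq.symm, mem_univ q⟩
  have ho : o ∈ univ.erase q := mem_erase.2 ⟨hoq, mem_univ o⟩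
  have prod_erase_o := (mul_prod_erase _ (fun j => p j ^ 2) hq).symm
  have prod_erase_q := (mul_prod_erase _ (fun j => p j ^ 2) ho).symm
  rw [erase_right_comm] at prod_erase_q
  simp only [splitGini, prod_erase_o, prod_erase_q]
  ring

theorem splitGini_lt_splitGini_iff [CommRing R] [LinearOrder R] [IsStrictOrderedRing R]
    {p : ι → R} (hp : ∀ i, 0 < p i) {o q : ι} (hoq : o ≠ q) :
    splitGini p o < splitGini p q ↔ p o < p q := by
  have hcoeff : 0 < 2 * p o * p q * ∏ i ∈ (univ.erase o).erase q, p i ^ 2 := by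
    have := prod_pos fun i (_ : i ∈ (univ.erase o).erase q) => pow_pos (hp i) 2
    have := hp o
    have := hp q
    positivity
  rw [← sub_neg, splitGini_sub_splitGini p hoq, ← smul_eq_mul, smul_neg_iff_of_pos_left hcoeff, sub_neg]

end SplitGini

/-- Difference of weighted Gini impurities of splitting on two distinct attributes `o` and
`q`, for `n` independent binary attributes with conjunctive label; in particular
`G(o) < G(q)` iff `p o < p q`. -/
theorem gini_impurity_multi_difference (n : ℕ) (p : Fin n → ℝ)
    (hp : ∀ i, 0 < p i ∧ p i < 1) (o q : Fin n) (hoq : o ≠ q) :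
    ((2 * (∏ j, p j) - 2 * p o * ∏ j ∈ univ.erase o, (p j) ^ 2)
        - (2 * (∏ j, p j) - 2 * p q * ∏ j ∈ univ.erase q, (p j) ^ 2)
      = 2 * p o * p q * (∏ i ∈ (univ.erase o).erase q, (p i) ^ 2) * (p o - p q)) ∧
    ((2 * (∏ j, p j) - 2 * p o * ∏ j ∈ univ.erase o, (p j) ^ 2)
        < (2 * (∏ j, p j) - 2 * p q * ∏ j ∈ univ.erase q, (p j) ^ 2)
      ↔ p o < p q) :=
  ⟨splitGini_sub_splitGini p hoq, splitGini_lt_splitGini_iff (fun i => (hp i).1) hoq⟩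
end

section
/- For n independent binary attributes with favorable probabilities p_i ∈ (0,1) and conjunctive label, the attribute minimizing the weighted Gini impurity G(k) = 2·(∏_j p_j) - 2·p_k·∏_{j≠k} p_j² is exactly the attribute with the minimal favorable probability p_k. -/
/-!
Writing `P = ∏ j, p j`, the split on attribute `k` has impurity `G(k) = 2 P - 2 P² / p k`,
because `p k · ∏_{j ≠ k} (p j)² = (p k · ∏_{j ≠ k} p j)² / p k = P² / p k`.
Since `P > 0`, `G` is an increasing function of `p k`.
-/

open Finset

namespace GiniSplit

variable {ι : Type*} [DecidableEq ι]

lemma mul_prod_erase_sq {K : Type*} [Semifield K] (s : Finset ι) (f : ι → K) {j : ι}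
    (hj : j ∈ s) (hfj : f j ≠ 0) :
    f j * ∏ i ∈ s.erase j, f i ^ 2 = (∏ i ∈ s, f i) ^ 2 / f j := by
  rw [eq_div_iff hfj, ← mul_prod_erase s f hj, prod_pow]
  ring

variable [Fintype ι] {K : Type*} [Field K]

def impurity (p : ι → K) (k : ι) : K :=
  2 * (∏ i, p i) - 2 * p k * ∏ i ∈ univ.erase k, p i ^ 2

lemma impurity_eq (p : ι → K) {k : ι} (hk : p k ≠ 0) :
    impurity p k = 2 * (∏ i, p i) - 2 * ((∏ i, p i) ^ 2 / p k) := by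
  rw [impurity, mul_assoc, mul_prod_erase_sq univ p (mem_univ k) hk]

lemma impurity_le_impurity_iff [LinearOrder K] [IsStrictOrderedRing K] {p : ι → K}
    (hp : ∀ i, 0 < p i) (k j : ι) :
    impurity p k ≤ impurity p j ↔ p k ≤ p j := by
  have hP : 0 < (∏ i, p i) ^ 2 := pow_pos (prod_pos fun i _ ↦ hp i) 2
  rw [impurity_eq p (hp k).ne', impurity_eq p (hp j).ne', sub_le_sub_iff_left,
    mul_le_mul_iff_right₀ two_pos, div_le_div_iff_of_pos_left hP (hp j) (hp k)]

end GiniSplit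

/-- For `n` independent binary attributes with favorable probabilities `p i ∈ (0,1)` and
conjunctive label, attribute `k` minimizes the weighted Gini impurity
`G(k) = 2·(∏ j, p j) - 2·p k·∏_{j ≠ k} (p j)²` iff `p k` is minimal. -/
theorem gini_argmin (n : ℕ) (p : Fin n → ℝ)
    (hp : ∀ i, 0 < p i ∧ p i < 1) (k : Fin n) :
    (∀ j, (2 * (∏ i, p i) - 2 * p k * ∏ i ∈ univ.erase k, (p i) ^ 2)
        ≤ (2 * (∏ i, p i) - 2 * p j * ∏ i ∈ univ.erase j, (p i) ^ 2))
      ↔ (∀ j, p k ≤ p j) :=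
  forall_congr' (GiniSplit.impurity_le_impurity_iff (fun i ↦ (hp i).1) k)
end

section
/- For every p_0 ∈ (0, 1/2), min(G_low(p_0), G_high(p_0)) < G_species(p_0), where G_species(p_0) = 1/4 + p_0(1-2p_0), G_low(p_0) = 1/2 - 1/(8(1-p_0)), and G_high(p_0) = 1/2 - 1/(8(p_0+1/2)). Hence the sensitive attribute 'species' is never chosen at the root of the Gini-based decision tree except in the corner cases p_0 ∈ {0, 1/2}. -/
/-- For every `p_0 ∈ (0, 1/2)`, `min(G_low(p_0), G_high(p_0)) < G_species(p_0)`: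
the sensitive attribute 'species' is never chosen at the root of the Gini-based
decision tree except in the corner cases. -/
theorem species_never_root (p0 : ℝ) (h0 : 0 < p0) (h1 : p0 < 1 / 2) :
    min (1 / 2 - 1 / (8 * (1 - p0))) (1 / 2 - 1 / (8 * (p0 + 1 / 2)))
      < 1 / 4 + p0 * (1 - 2 * p0) := by
  rw [min_lt_iff]
  rcases le_or_gt p0 (3/10) with hc | hc
  · right
    have hd : (0:ℝ) < 8 * (p0 + 1 / 2) := by linarith
    rw [sub_lt_iff_lt_add, ← sub_lt_iff_lt_add', lt_div_iff₀ hd]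
    nlinarith [sq_nonneg p0, mul_pos h0 h0]
  · left
    have hd : (0:ℝ) < 8 * (1 - p0) := by linarith
    rw [sub_lt_iff_lt_add, ← sub_lt_iff_lt_add', lt_div_iff₀ hd]
    have hA : (0:ℝ) < p0 - 3/10 := by linarith
    have hB : (0:ℝ) < 1/2 - p0 := by linarith
    nlinarith [mul_pos hA hB, mul_pos (mul_pos hA hB) hB]
end
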